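/- Let f : ℂ → ℂ be continuous and suppose that for every M₀ > 0 and every sequence (a_n) with a_n ≥ M₀ for all n and a_n → ∞, there exists a point ζ with |f^[n](ζ)| ≤ a_n for all n whose orbit tends to infinity (ζ ∈ I(f)). Then the escaping set I(f) is not contained in any σ-compact subset of UO(f); in particular I(f) is not σ-compact. -/

import Mathlib

/-!
If `X` is σ-compact, `X = ⋃ K j`, and every orbit starting in `X` is unbounded, then by compactness
(and continuity of the iterates) there is `N j` such that every orbit starting in `K j` leaves the
disc of radius `j + 1` within its first `N j` steps. A sequence `a` tending to infinity slowly enough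
that `a n ≤ j + 1` for `n ≤ N j` is then exceeded by every orbit starting in `X`. The slowly escaping
point `ζ` provided by the hypothesis for this `a` lies in `I(f)` but not in `X`.
-/

open Filter Set Bornology

theorem Nat.exists_tendsto_atTop_forall_le_of_le (N : ℕ → ℕ) :
    ∃ a : ℕ → ℕ, Tendsto a atTop atTop ∧ ∀ j n, n ≤ N j → a n ≤ j := by
  classical
  -- `a n` counts the indices `i < n` such that `n` lies beyond `N 0, …, N i`.
  refine ⟨fun n => ((Finset.range n).filter fun i => ∀ k ≤ i, N k < n).card, ?_, ?_⟩
  · refine tendsto_atTop.2 fun b => ?_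
    have hlarge : ∀ᶠ n in atTop, b ≤ n ∧ ∀ k ∈ Finset.range b, N k < n :=
      (eventually_ge_atTop b).and ((Finset.eventually_all _).2 fun k _ => eventually_gt_atTop (N k))
    filter_upwards [hlarge] with n ⟨hbn, hN⟩
    calc b = (Finset.range b).card := (Finset.card_range b).symm
      _ ≤ _ := Finset.card_le_card fun i hi => by
        simp only [Finset.mem_range, Finset.mem_filter] at hi hN ⊢
        exact ⟨by omega, fun k hk => hN k (by omega)⟩
  · intro j n hn
    calc _ ≤ (Finset.range j).card := Finset.card_le_card fun i hi => by
          simp only [Finset.mem_range, Finset.mem_filter] at hi ⊢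
          by_contra! hij
          exact (hi.2 j hij).not_ge hn
      _ = j := Finset.card_range j

variable {E : Type*} [SeminormedAddCommGroup E] {f : E → E}

theorem exists_lt_norm_iterate_of_not_isBounded {z : E}
    (hz : ¬ IsBounded (range fun n => f^[n] z)) (R : ℝ) : ∃ n, R < ‖f^[n] z‖ := by
  contrapose! hz
  exact isBounded_iff_forall_norm_le.2 ⟨R, forall_mem_range.2 hz⟩

theorem not_isBounded_range_iterate_of_tendsto {z : E}
    (hz : Tendsto (fun n => ‖f^[n] z‖) atTop atTop) :
    ¬ IsBounded (range fun n => f^[n] z) := by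
  rintro hb
  obtain ⟨C, hC⟩ := isBounded_iff_forall_norm_le.1 hb
  obtain ⟨n, hn⟩ := (hz.eventually_gt_atTop C).exists
  exact (hC _ (mem_range_self n)).not_gt hn

theorem IsCompact.exists_forall_exists_le_lt_norm_iterate (hf : Continuous f) {K : Set E}
    (hK : IsCompact K) (hKunb : ∀ z ∈ K, ¬ IsBounded (range fun n => f^[n] z)) (R : ℝ) :
    ∃ N, ∀ z ∈ K, ∃ k ≤ N, R < ‖f^[k] z‖ := by
  have hcover : K ⊆ ⋃ N, ⋃ k ∈ Iic N, {z | R < ‖f^[k] z‖} := fun z hz => by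
    obtain ⟨k, hk⟩ := exists_lt_norm_iterate_of_not_isBounded (hKunb z hz) R
    exact mem_iUnion.2 ⟨k, mem_iUnion₂.2 ⟨k, self_mem_Iic, hk⟩⟩
  obtain ⟨N, hN⟩ := hK.elim_directed_cover _
    (fun N => isOpen_biUnion fun k _ => isOpen_lt continuous_const (hf.iterate k).norm) hcover
    (Monotone.directed_le fun _ _ h => biUnion_subset_biUnion_left (Iic_subset_Iic.2 h))
  exact ⟨N, fun z hz => by simpa using hN hz⟩

theorem IsSigmaCompact.exists_tendsto_atTop_forall_exists_lt_norm_iterate (hf : Continuous f)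
    {X : Set E} (hX : IsSigmaCompact X) (hXunb : ∀ z ∈ X, ¬ IsBounded (range fun n => f^[n] z)) :
    ∃ a : ℕ → ℝ, (∀ n, 1 ≤ a n) ∧ Tendsto a atTop atTop ∧ ∀ z ∈ X, ∃ n, a n < ‖f^[n] z‖ := by
  obtain ⟨K, hKc, rfl⟩ := hX
  have hN (j : ℕ) : ∃ N, ∀ z ∈ K j, ∃ k ≤ N, (j : ℝ) + 1 < ‖f^[k] z‖ :=
    (hKc j).exists_forall_exists_le_lt_norm_iterate hf
      (fun z hz => hXunb z (mem_iUnion_of_mem j hz)) _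
  choose N hN using hN
  obtain ⟨a, ha_tendsto, ha_le⟩ := Nat.exists_tendsto_atTop_forall_le_of_le N
  refine ⟨fun n => (a n : ℝ) + 1, fun n => by simp, ?_, fun z hz => ?_⟩
  · exact tendsto_atTop_add_const_right _ 1 (tendsto_natCast_atTop_atTop.comp ha_tendsto)
  · obtain ⟨j, hj⟩ := mem_iUnion.1 hz
    obtain ⟨k, hkN, hk⟩ := hN j z hj
    refine ⟨k, lt_of_le_of_lt ?_ hk⟩
    exact add_le_add_left (Nat.cast_le.2 (ha_le j k hkN)) 1

theorem escaping_set_not_sigmaCompact (f : ℂ → ℂ) (hf : Continuous f)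
    (I UO : Set ℂ)
    (hI : I = {z : ℂ | Filter.Tendsto (fun n : ℕ => ‖f^[n] z‖)
      Filter.atTop Filter.atTop})
    (hUO : UO = {z : ℂ | ¬ Bornology.IsBounded (Set.range fun n : ℕ => f^[n] z)})
    (hslow : ∀ M₀ : ℝ, 0 < M₀ → ∀ a : ℕ → ℝ, (∀ n, M₀ ≤ a n) →
      Filter.Tendsto a Filter.atTop Filter.atTop →
      ∃ ζ : ℂ, (∀ n : ℕ, ‖f^[n] ζ‖ ≤ a n) ∧ ζ ∈ I) :
    (∀ X : Set ℂ, X ⊆ UO → IsSigmaCompact X → ¬ I ⊆ X) ∧ ¬ IsSigmaCompact I := by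
  subst hI hUO
  have hnot_subset (X : Set ℂ) (hXUO : X ⊆ {z | ¬ IsBounded (range fun n => f^[n] z)})
      (hX : IsSigmaCompact X) : ¬ {z | Tendsto (fun n => ‖f^[n] z‖) atTop atTop} ⊆ X :=
      fun hIX => by
    obtain ⟨a, ha_one, ha_tendsto, ha_lt⟩ :=
      hX.exists_tendsto_atTop_forall_exists_lt_norm_iterate hf hXUO
    obtain ⟨ζ, hζa, hζI⟩ := hslow 1 one_pos a ha_one ha_tendsto
    obtain ⟨n, hn⟩ := ha_lt ζ (hIX hζI)
    exact (hζa n).not_gt hn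
  exact ⟨hnot_subset, fun hI => hnot_subset _
    (fun _ => not_isBounded_range_iterate_of_tendsto) hI subset_rfl⟩
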